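/- arXiv:2510.08310 — 2 statements merged into one kernel-verified Lean document; each statement's English description precedes it below -/
import Mathlib

section
/- In any graph G obtained from a prism by TF-inflation of a vertex v, every hamiltonian cycle of G must contain the pillar edge incident to the inserted Tutte Fragment (i.e., the edge incident to the vertex c of that fragment). -/
/-!
If a hamiltonian cycle avoided the pillar edge at the vertex `c` of the inserted Tutte Fragment,
it would meet the fragment only through the two edges at `a` and `b`. A cycle that crosses
the boundary of a vertex set through exactly two edges runs through that set in one piece, so
the fragment would contain a hamiltonian path from `a` to `b`; an exhaustive search shows
that it does not.
-/

open SimpleGraph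

/-- Vertex type of the `n`-prism `C_n □ K_2`: the base cycle consists of the
vertices `(i, false)` (the `sᵢ`) and the top cycle of the vertices `(i, true)` (the `tᵢ`). -/
abbrev PV (n : ℕ) := ZMod n × Bool

/-- The prism graph `C_n □ K_2`. -/
def prismG (n : ℕ) : SimpleGraph (PV n) :=
  SimpleGraph.fromRel fun u v =>
    (u.1 = v.1 ∧ u.2 ≠ v.2) ∨ (u.2 = v.2 ∧ v.1 = u.1 + 1)

/-- The pillar edge `sᵢtᵢ`. -/
def pillar (n : ℕ) (i : ZMod n) : Sym2 (PV n) :=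
  s(((i, false) : PV n), ((i, true) : PV n))

/-- The base-cycle edge `sᵢs_{i+1}`. -/
def baseEdge (n : ℕ) (i : ZMod n) : Sym2 (PV n) :=
  s(((i, false) : PV n), ((i + 1, false) : PV n))

/-- The top-cycle edge `tᵢt_{i+1}`. -/
def topEdge (n : ℕ) (i : ZMod n) : Sym2 (PV n) :=
  s(((i, true) : PV n), ((i + 1, true) : PV n))

def IsPillar {n : ℕ} (e : Sym2 (PV n)) : Prop := ∃ i, e = pillar n i
def IsBaseEdge {n : ℕ} (e : Sym2 (PV n)) : Prop := ∃ i, e = baseEdge n i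
def IsTopEdge {n : ℕ} (e : Sym2 (PV n)) : Prop := ∃ i, e = topEdge n i

/-- A hamiltonian cycle of the prism is *meandering* if no two of its edges lying on the
top cycle or on the base cycle are adjacent (share a vertex; in a cycle, edges sharing a
vertex are exactly the consecutive ones). -/
def Meandering {n : ℕ} {v : PV n} (C : (prismG n).Walk v v) : Prop :=
  ∀ e ∈ C.edges, ∀ f ∈ C.edges, e ≠ f →
    ((IsBaseEdge e ∧ IsBaseEdge f) ∨ (IsTopEdge e ∧ IsTopEdge f)) → ¬ ∃ x, x ∈ e ∧ x ∈ f

/-- Explicit edge list of the Tutte Fragment on 15 vertices, following Tutte (1946):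
`0 = a`, `1 = b` (the two bottom corner 2-valent vertices), `2 = c` (the apex 2-valent
vertex); `3, …, 14` are the internal 3-valent vertices `p₁, …, p₁₂`. -/
def TFedges : List (Fin 15 × Fin 15) :=
  [(0,4),(4,5),(5,6),(6,2),(1,7),(7,8),(8,2),(0,14),(14,1),(4,9),(9,3),(3,10),(10,7),
   (5,11),(11,12),(6,13),(13,8),(13,12),(12,10),(11,9),(3,14)]

/-- The Tutte Fragment as a simple graph on `Fin 15`. -/
def TF : SimpleGraph (Fin 15) :=
  SimpleGraph.fromRel fun x y => (x, y) ∈ TFedges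

/-- The attachment port of the prism vertex `u` used for the former prism edge towards the
neighbour `w`, after the TF-inflations prescribed by the set `S` of inflated vertices and the
orientation choice `orient`.  A non-inflated vertex keeps its single representative (port `0`);
for an inflated vertex the vertex `c = 2` of its Tutte Fragment is incident with the pillar,
and the vertices `a = 0`, `b = 1` are attached to the two cycle neighbours according to
`orient u`. -/
def port {n : ℕ} (S : Finset (PV n)) (orient : PV n → Bool) (u w : PV n) : Fin 15 :=
  if u ∉ S then 0
  else if u.1 = w.1 then 2
  else if w.1 = u.1 + 1 then (if orient u then 0 else 1)
  else (if orient u then 1 else 0)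

/-- Vertex type of the TF-inflated prism: an inflated prism vertex `v ∈ S` is replaced by the
15 vertices `(v, k)` of a fresh copy of the Tutte Fragment, while a non-inflated vertex `v`
is represented by `(v, 0)` alone. -/
def InflV (n : ℕ) (S : Finset (PV n)) := {x : PV n × Fin 15 // x.1 ∈ S ∨ x.2 = 0}

/-- The graph obtained from the prism `C_n □ K_2` by TF-inflating every vertex in `S`
(with orientations `orient`, and with the `c`-vertex of each fragment incident to the
corresponding pillar). -/
def inflPrism (n : ℕ) (S : Finset (PV n)) (orient : PV n → Bool) :
    SimpleGraph (InflV n S) :=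
  SimpleGraph.fromRel fun x y =>
    (x.val.1 = y.val.1 ∧ x.val.1 ∈ S ∧ TF.Adj x.val.2 y.val.2) ∨
    (x.val.1 ≠ y.val.1 ∧ (prismG n).Adj x.val.1 y.val.1 ∧
      x.val.2 = port S orient x.val.1 y.val.1 ∧
      y.val.2 = port S orient y.val.1 x.val.1)

/-- The vertex of the inflated prism representing the attachment port of the prism vertex `u`
towards its prism neighbour `w`. -/
def liftV {n : ℕ} (S : Finset (PV n)) (orient : PV n → Bool) (u w : PV n) :
    InflV n S :=
  ⟨(u, port S orient u w), by
    by_cases h : u ∈ S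
    · exact Or.inl h
    · exact Or.inr (by simp [port, h])⟩

/-- The set of (indices of) pillars of the prism carrying at least one TF-inflated vertex. -/
def inflatedPillars {n : ℕ} (S : Finset (PV n)) : Set (ZMod n) :=
  {i : ZMod n | ((i, false) : PV n) ∈ S ∨ ((i, true) : PV n) ∈ S}

instance (n : ℕ) (S : Finset (PV n)) : DecidableEq (InflV n S) := by
  unfold InflV; infer_instance

namespace List

variable {α : Type*} {R : α → α → Prop} {F : Set α} {p q P Q : α}

theorem forall_notMem_of_isChain_of_crossing
    (hcross : ∀ x y, R x y → x ∉ F → y ∈ F → (x = P ∧ y = p) ∨ (x = Q ∧ y = q)) :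
    ∀ {u : α} {T : List α}, (u :: T).IsChain R → u ∉ F → p ∉ T → q ∉ T → ∀ z ∈ T, z ∉ F
  | _, [], _, _, _, _ => by simp
  | u, y :: T, hch, hu, hp, hq => by
    rw [isChain_cons_cons] at hch
    have hy : y ∉ F := fun hy => by
      rcases hcross u y hch.1 hu hy with ⟨-, rfl⟩ | ⟨-, rfl⟩ <;> simp at hp hq
    rintro z (_ | ⟨_, hz⟩)
    · exact hy
    · exact forall_notMem_of_isChain_of_crossing hcross hch.2 hy (by simp_all) (by simp_all) z hz

theorem exists_eq_append_of_crossing (hR : ∀ x y, R x y → R y x)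
    (hcross : ∀ x y, R x y → x ∉ F → y ∈ F → (x = P ∧ y = p) ∨ (x = Q ∧ y = q)) :
    ∀ {x : α} {T : List α}, (x :: T).IsChain R → (x :: T).Nodup → x ∈ F → P ∉ T → p ∉ T →
      (∀ z ∈ (x :: T).getLast?, z ∉ F) →
      ∃ m r, T = m ++ r ∧ (∀ z ∈ m, z ∈ F) ∧ (∀ z ∈ r, z ∉ F) ∧ (x :: m).getLast? = some q
  | x, [], _, _, hx, _, _, hlast => absurd hx (hlast x rfl)
  | x, y :: T, hch, hnd, hx, hP, hp, hlast => by
    rw [isChain_cons_cons] at hch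
    by_cases hy : y ∈ F
    · obtain ⟨m, r, hmr, hm, hr, hq⟩ := exists_eq_append_of_crossing hR hcross hch.2
        hnd.of_cons hy (by simp_all) (by simp_all) (by simpa [getLast?_cons_cons] using hlast)
      refine ⟨y :: m, r, by rw [hmr, cons_append], ?_, hr, by rwa [getLast?_cons_cons]⟩
      rintro z (_ | ⟨_, hz⟩)
      exacts [hy, hm z hz]
    · rcases hcross y x (hR _ _ hch.1) hy hx with ⟨rfl, -⟩ | ⟨rfl, rfl⟩
      · simp at hP
      · refine ⟨[], y :: T, rfl, by simp, ?_, rfl⟩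
        rintro z (_ | ⟨_, hz⟩)
        · exact hy
        · exact forall_notMem_of_isChain_of_crossing hcross hch.2 hy (by simp_all)
            (by simp_all) z hz

theorem exists_eq_append_append_of_crossing (hR : ∀ x y, R x y → R y x)
    (hcross : ∀ x y, R x y → x ∉ F → y ∈ F → (x = P ∧ y = p) ∨ (x = Q ∧ y = q)) :
    ∀ {u : α} {T : List α}, (u :: T).IsChain R → (u :: T).Nodup → u ∉ F →
      (∀ z ∈ (u :: T).getLast?, z ∉ F) → (∃ z ∈ T, z ∈ F) →
      ∃ a m r, u :: T = a ++ m ++ r ∧ (∀ z ∈ a, z ∉ F) ∧ (∀ z ∈ m, z ∈ F) ∧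
        (∀ z ∈ r, z ∉ F) ∧
        (m.head? = some p ∧ m.getLast? = some q ∨ m.head? = some q ∧ m.getLast? = some p)
  | _, [], _, _, _, _, hF => by simp at hF
  | u, y :: T, hch, hnd, hu, hlast, hF => by
    rw [isChain_cons_cons] at hch
    have hlast' : ∀ z ∈ (y :: T).getLast?, z ∉ F := by simpa [getLast?_cons_cons] using hlast
    by_cases hy : y ∈ F
    · have huT : u ∉ T := fun h => (nodup_cons.mp hnd).1 (mem_cons_of_mem y h)
      have hyT : y ∉ T := (nodup_cons.mp hnd.of_cons).1
      rcases hcross u y hch.1 hu hy with ⟨rfl, rfl⟩ | ⟨rfl, rfl⟩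
      · obtain ⟨m, r, hmr, hm, hr, hq⟩ := exists_eq_append_of_crossing hR hcross hch.2
          hnd.of_cons hy huT hyT hlast'
        refine ⟨[u], y :: m, r, by rw [hmr]; rfl, by simpa using hu, ?_, hr, .inl ⟨rfl, hq⟩⟩
        rintro z (_ | ⟨_, hz⟩)
        exacts [hy, hm z hz]
      · obtain ⟨m, r, hmr, hm, hr, hq⟩ := exists_eq_append_of_crossing hR
          (fun x z h hx hz => (hcross x z h hx hz).symm) hch.2 hnd.of_cons hy huT hyT hlast'
        refine ⟨[u], y :: m, r, by rw [hmr]; rfl, by simpa using hu, ?_, hr, .inr ⟨rfl, hq⟩⟩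
        rintro z (_ | ⟨_, hz⟩)
        exacts [hy, hm z hz]
    · obtain ⟨a, m, r, hamr, ha, hm, hr, hends⟩ :=
        exists_eq_append_append_of_crossing hR hcross hch.2 hnd.of_cons hy hlast'
          (by simpa [hy] using hF)
      refine ⟨u :: a, m, r, by rw [hamr]; rfl, ?_, hm, hr, hends⟩
      rintro z (_ | ⟨_, hz⟩)
      exacts [hu, ha z hz]

theorem exists_isChain_of_crossing (hR : ∀ x y, R x y → R y x)
    (hcross : ∀ x y, R x y → x ∉ F → y ∈ F → (x = P ∧ y = p) ∨ (x = Q ∧ y = q))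
    {u : α} {T : List α} (hch : (u :: T).IsChain R) (hnd : (u :: T).Nodup) (hu : u ∉ F)
    (hlast : ∀ z ∈ (u :: T).getLast?, z ∉ F) (hcov : ∀ z ∈ F, z ∈ T) (hp : p ∈ F) :
    ∃ m : List α, m.IsChain R ∧ m.Nodup ∧ (∀ z, z ∈ m ↔ z ∈ F) ∧
      (m.head? = some p ∧ m.getLast? = some q ∨ m.head? = some q ∧ m.getLast? = some p) := by
  obtain ⟨a, m, r, hamr, ha, hm, hr, hends⟩ :=
    exists_eq_append_append_of_crossing hR hcross hch hnd hu hlast ⟨p, hcov p hp, hp⟩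
  have hinfix : m <:+: u :: T := hamr ▸ infix_append a m r
  refine ⟨m, hch.infix hinfix, hnd.sublist hinfix.sublist, fun z => ⟨hm z, fun hz => ?_⟩, hends⟩
  have hz' : z ∈ a ++ m ++ r := hamr ▸ mem_cons_of_mem u (hcov z hz)
  simp only [mem_append] at hz'
  rcases hz' with (h | h) | h
  exacts [absurd hz (ha z h), h, absurd hz (hr z h)]

end List

namespace SimpleGraph

variable {V W : Type*} {G : SimpleGraph V} {H : SimpleGraph W}

theorem Walk.isChain_support_mem_edges :
    ∀ {u v : V} (p : G.Walk u v), p.support.IsChain (fun a b => s(a, b) ∈ p.edges)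
  | _, _, nil => List.isChain_singleton _
  | _, _, cons h p => by
    rw [support_cons, List.isChain_cons, edges_cons]
    refine ⟨fun y hy => ?_, (isChain_support_mem_edges p).imp fun a b h => .tail _ h⟩
    rw [← cons_tail_support, List.head?_cons, Option.mem_some_iff] at hy
    exact hy ▸ List.mem_cons_self

theorem Walk.IsHamiltonianCycle.exists_isChain [DecidableEq V] {x : V} {C : G.Walk x x}
    (hC : C.IsHamiltonianCycle) (z : V) :
    ∃ l : List V, (z :: l).IsChain (fun a b => s(a, b) ∈ C.edges) ∧ l.Nodup ∧ (∀ y, y ∈ l) ∧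
      l.getLast? = some z := by
  set C₀ := C.rotate z (hC.mem_support z)
  have hC₀ : C₀.IsHamiltonianCycle := hC.rotate _
  have hsupp : C₀.support = z :: C₀.support.tail := C₀.cons_tail_support.symm
  have hlast : C₀.support.tail.getLast? = some z := by
    rw [← C₀.support_tail_of_not_nil hC₀.isCycle.not_nil,
      List.getLast?_eq_some_getLast C₀.tail.support_ne_nil, getLast_support]
  refine ⟨C₀.support.tail, ?_, hC₀.isCycle.support_nodup, fun y => ?_, hlast⟩
  · rw [← hsupp]
    exact C₀.isChain_support_mem_edges.imp fun a b h =>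
      (C.rotate_edges z (hC.mem_support z)).perm.mem_iff.mp h
  · rcases List.mem_cons.mp (hsupp ▸ hC₀.mem_support y) with rfl | h
    exacts [List.mem_of_getLast? hlast, h]

theorem Walk.IsHamiltonianCycle.exists_isChain_of_crossing [DecidableEq V] (φ : H ↪g G)
    {x : V} {C : G.Walk x x} (hC : C.IsHamiltonianCycle) {p q : W} {P Q z₀ : V}
    (hcross : ∀ a b, s(a, b) ∈ C.edges → a ∉ Set.range φ → b ∈ Set.range φ →
      (a = P ∧ b = φ p) ∨ (a = Q ∧ b = φ q))
    (hz₀ : z₀ ∉ Set.range φ) (hP : z₀ ≠ P) (hQ : z₀ ≠ Q) :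
    ∃ l : List W, l.IsChain H.Adj ∧ l.Nodup ∧ (∀ w, w ∈ l) ∧
      (l.head? = some p ∧ l.getLast? = some q ∨ l.head? = some q ∧ l.getLast? = some p) := by
  obtain ⟨l, hch, hnd, hcov, hlast⟩ := hC.exists_isChain z₀
  obtain ⟨z₁, T, rfl⟩ := List.exists_cons_of_ne_nil (l := l) (by rintro rfl; simp at hlast)
  rw [List.isChain_cons_cons] at hch
  have hz₁ : z₁ ∉ Set.range φ := fun h => by
    rcases hcross _ _ hch.1 hz₀ h with ⟨h', -⟩ | ⟨h', -⟩
    exacts [hP h', hQ h']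
  obtain ⟨m, hm, hmnd, hmF, hends⟩ := List.exists_isChain_of_crossing
    (fun a b h => Sym2.eq_swap ▸ h) hcross hch.2 hnd hz₁
    (by simpa [hlast] using hz₀)
    (fun z hz => (List.mem_cons.mp (hcov z)).resolve_left fun h => hz₁ (h ▸ hz))
    (Set.mem_range_self p)
  obtain ⟨l', rfl⟩ : m ∈ Set.range (List.map φ) :=
    (Set.range_list_map φ).ge fun z hz => (hmF z).1 hz
  refine ⟨l', ?_, (List.nodup_map_iff φ.injective).1 hmnd, fun w => ?_, ?_⟩
  · exact (List.isChain_map φ).1 hm |>.imp fun a b h => φ.map_adj_iff.1 (C.adj_of_mem_edges h)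
  · simpa using (hmF (φ w)).2 (Set.mem_range_self w)
  · simpa [List.head?_map, List.getLast?_map] using hends

end SimpleGraph

instance : DecidableRel TF.Adj :=
  inferInstanceAs (DecidableRel (fromRel fun x y => (x, y) ∈ TFedges).Adj)

-- Depth-first search: is there a path of `k` edges from `cur` to `t` avoiding `vis`?
def pathSearch {m : ℕ} (G : SimpleGraph (Fin m)) [DecidableRel G.Adj] (t : Fin m) :
    ℕ → Fin m → List (Fin m) → Bool
  | 0, cur, _ => cur == t
  | k + 1, cur, vis => (List.finRange m).any fun y =>
      decide (G.Adj cur y) && !decide (y ∈ vis) && pathSearch G t k y (y :: vis)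

theorem pathSearch_eq_true_of_isChain {m : ℕ} {G : SimpleGraph (Fin m)} [DecidableRel G.Adj]
    {t : Fin m} :
    ∀ (l : List (Fin m)) (cur : Fin m) (vis : List (Fin m)), (cur :: l).IsChain G.Adj →
      (cur :: l).getLast? = some t → (∀ y ∈ l, y ∉ vis) → l.Nodup →
      pathSearch G t l.length cur vis = true
  | [], cur, vis, _, hlast, _, _ => by simpa [pathSearch] using hlast
  | y :: l, cur, vis, hch, hlast, hvis, hnd => by
    rw [List.isChain_cons_cons] at hch
    simp only [pathSearch, List.length_cons, List.any_eq_true, Bool.and_eq_true,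
      decide_eq_true_eq, Bool.not_eq_true', decide_eq_false_iff_not]
    refine ⟨y, List.mem_finRange y, ⟨hch.1, hvis y List.mem_cons_self⟩,
      pathSearch_eq_true_of_isChain l y (y :: vis) hch.2
        (by rwa [List.getLast?_cons_cons] at hlast) (fun z hz => ?_) hnd.of_cons⟩
    rintro (_ | ⟨_, hz'⟩)
    exacts [(List.nodup_cons.mp hnd).1 hz, hvis z (List.mem_cons_of_mem y hz) hz']

theorem TF_no_hamiltonian_path_zero_one (l : List (Fin 15)) (hch : l.IsChain TF.Adj)
    (hnd : l.Nodup) (hcov : ∀ k, k ∈ l) (h0 : l.head? = some 0) : l.getLast? ≠ some 1 := by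
  intro h1
  obtain ⟨l, rfl⟩ := List.head?_eq_some_iff.mp h0
  have hlen : l.length = 14 := by
    have := List.toFinset_card_of_nodup hnd
    rw [Finset.eq_univ_iff_forall.mpr fun k => List.mem_toFinset.mpr (hcov k)] at this
    simpa using this.symm
  have := pathSearch_eq_true_of_isChain l 0 [0] hch h1 (fun y hy h => by
    rw [List.mem_singleton] at h
    exact (List.nodup_cons.mp hnd).1 (h ▸ hy)) hnd.of_cons
  rw [hlen] at this
  exact absurd this (by decide)

theorem TF_no_hamiltonian_path (l : List (Fin 15)) (hch : l.IsChain TF.Adj) (hnd : l.Nodup)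
    (hcov : ∀ k, k ∈ l) :
    ¬ (l.head? = some 0 ∧ l.getLast? = some 1 ∨ l.head? = some 1 ∧ l.getLast? = some 0) := by
  rintro (⟨h0, h1⟩ | ⟨h1, h0⟩)
  · exact TF_no_hamiltonian_path_zero_one l hch hnd hcov h0 h1
  · refine TF_no_hamiltonian_path_zero_one l.reverse ?_ (List.nodup_reverse.mpr hnd)
      (fun k => List.mem_reverse.mpr (hcov k)) (by rwa [List.head?_reverse])
      (by rwa [List.getLast?_reverse])
    exact List.isChain_reverse.mpr (hch.imp fun _ _ h => h.symm)

theorem ZMod.sub_one_ne_add_one {n : ℕ} (hn : 3 ≤ n) (a : ZMod n) : a - 1 ≠ a + 1 := by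
  intro h
  have h2 : ((2 : ℕ) : ZMod n) = 0 := by push_cast; linear_combination -h
  rw [ZMod.natCast_eq_zero_iff] at h2
  exact absurd (Nat.le_of_dvd two_pos h2) (by omega)

section Inflation

variable {n : ℕ} {S : Finset (PV n)} {orient : PV n → Bool}

theorem port_add_one (hn : 3 ≤ n) {u : PV n} (hu : u ∈ S) :
    port S orient u (u.1 + 1, u.2) = if orient u then 0 else 1 := by
  have : Fact (1 < n) := ⟨by omega⟩
  simp [port, hu]

theorem port_sub_one (hn : 3 ≤ n) {u : PV n} (hu : u ∈ S) :
    port S orient u (u.1 - 1, u.2) = if orient u then 1 else 0 := by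
  have : Fact (1 < n) := ⟨by omega⟩
  have h : u.1 ≠ u.1 - 1 := fun h => one_ne_zero (sub_eq_self.mp h.symm)
  simp [port, hu, h, ZMod.sub_one_ne_add_one hn u.1]
theorem prismG_adj_eq {u w : PV n} (h : (prismG n).Adj u w) :
    w = (u.1, !u.2) ∨ w = (u.1 + 1, u.2) ∨ w = (u.1 - 1, u.2) := by
  rw [prismG, fromRel_adj] at h
  obtain ⟨-, (⟨h1, h2⟩ | ⟨h1, h2⟩) | (⟨h1, h2⟩ | ⟨h1, h2⟩)⟩ := h
  · exact .inl (Prod.ext h1.symm (Bool.eq_not_of_ne h2.symm))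
  · exact .inr (.inl (Prod.ext h2 h1.symm))
  · exact .inl (Prod.ext h1 (Bool.eq_not_of_ne h2))
  · exact .inr (.inr (Prod.ext (eq_sub_of_add_eq h2.symm) h1))

theorem inflPrism_adj_eq_liftV {a b : InflV n S} (h : (inflPrism n S orient).Adj a b)
    (hne : a.val.1 ≠ b.val.1) :
    (prismG n).Adj a.val.1 b.val.1 ∧ a = liftV S orient a.val.1 b.val.1 ∧
      b = liftV S orient b.val.1 a.val.1 := by
  rw [inflPrism, fromRel_adj] at h
  obtain ⟨-, (⟨h1, -⟩ | ⟨-, hadj, ha, hb⟩) | (⟨h1, -⟩ | ⟨-, hadj, hb, ha⟩)⟩ := h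
  · exact absurd h1 hne
  · exact ⟨hadj, Subtype.ext (Prod.ext rfl ha), Subtype.ext (Prod.ext rfl hb)⟩
  · exact absurd h1.symm hne
  · exact ⟨hadj.symm, Subtype.ext (Prod.ext rfl ha), Subtype.ext (Prod.ext rfl hb)⟩

theorem inflPrism_adj_iff_of_fst_eq {a b : InflV n S} (h : a.val.1 = b.val.1)
    (ha : a.val.1 ∈ S) : (inflPrism n S orient).Adj a b ↔ TF.Adj a.val.2 b.val.2 := by
  rw [inflPrism, fromRel_adj]
  refine ⟨?_, fun hab => ⟨fun e => hab.ne (congrArg (·.val.2) e), .inl (.inl ⟨h, ha, hab⟩)⟩⟩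
  rintro ⟨-, (⟨-, -, hab⟩ | ⟨hne, -⟩) | (⟨-, -, hab⟩ | ⟨hne, -⟩)⟩
  exacts [hab, absurd h hne, hab.symm, absurd h.symm hne]

variable (orient) in
def fragment {v : PV n} (hv : v ∈ S) : TF ↪g inflPrism n S orient where
  toFun k := ⟨(v, k), Or.inl hv⟩
  inj' _ _ h := congrArg (fun z : InflV n S => z.val.2) h
  map_rel_iff' := inflPrism_adj_iff_of_fst_eq rfl hv

theorem mem_range_fragment {v : PV n} (hv : v ∈ S) {z : InflV n S} :
    z ∈ Set.range (fragment orient hv) ↔ z.val.1 = v :=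
  ⟨by rintro ⟨k, rfl⟩; rfl, fun h => ⟨z.val.2, Subtype.ext (Prod.ext h.symm rfl)⟩⟩

theorem inflPrism_crossing_fragment {v : PV n} (hv : v ∈ S) {a b : InflV n S}
    (hab : (inflPrism n S orient).Adj a b) (ha : a ∉ Set.range (fragment orient hv))
    (hb : b ∈ Set.range (fragment orient hv))
    (hpillar : s(a, b) ≠ s(liftV S orient v (v.1, !v.2), liftV S orient (v.1, !v.2) v)) :
    (a = liftV S orient (v.1 + 1, v.2) v ∧
        b = fragment orient hv (port S orient v (v.1 + 1, v.2))) ∨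
      (a = liftV S orient (v.1 - 1, v.2) v ∧
        b = fragment orient hv (port S orient v (v.1 - 1, v.2))) := by
  rw [mem_range_fragment] at ha hb
  obtain ⟨hadj, ha', hb'⟩ := inflPrism_adj_eq_liftV hab (hb ▸ ha)
  rw [hb] at hadj ha' hb'
  rcases prismG_adj_eq hadj.symm with h | h | h <;> rw [h] at ha' hb'
  · exact absurd (by rw [ha', hb', Sym2.eq_swap]) hpillar
  · exact .inl ⟨ha', hb'⟩
  · exact .inr ⟨ha', hb'⟩

end Inflation

/-- In any graph obtained from a prism by TF-inflation of a vertex `v`,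
every hamiltonian cycle must contain the pillar edge incident to the inserted Tutte
Fragment, i.e. the edge incident with the vertex `c` of that fragment. -/
theorem stmt13 (n : ℕ) (hn : 3 ≤ n) (S : Finset (PV n)) (orient : PV n → Bool)
    (v : PV n) (hv : v ∈ S) {x : InflV n S} (C : (inflPrism n S orient).Walk x x)
    (hC : C.IsHamiltonianCycle) :
    s(liftV S orient v (v.1, !v.2), liftV S orient (v.1, !v.2) v) ∈ C.edges := by
  by_contra hpillar
  set φ := fragment orient hv
  have hcross : ∀ a b, s(a, b) ∈ C.edges → a ∉ Set.range φ → b ∈ Set.range φ →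
      (a = liftV S orient (v.1 + 1, v.2) v ∧ b = φ (port S orient v (v.1 + 1, v.2))) ∨
        (a = liftV S orient (v.1 - 1, v.2) v ∧ b = φ (port S orient v (v.1 - 1, v.2))) :=
    fun a b hab ha hb =>
      inflPrism_crossing_fragment hv (C.adj_of_mem_edges hab) ha hb fun h => hpillar (h ▸ hab)
  -- The cycle is read off from the far end of the pillar edge, which lies neither in the
  -- fragment nor on the other two edges leaving it.
  have hz₀ : ∀ w : InflV n S, w.val.1.2 = v.2 → liftV S orient (v.1, !v.2) v ≠ w :=
    by rintro w hw rfl; exact Bool.not_ne_self v.2 hw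
  obtain ⟨l, hch, hnd, hcov, hends⟩ := hC.exists_isChain_of_crossing φ hcross
    (fun h => Bool.not_ne_self v.2 (congrArg Prod.snd ((mem_range_fragment hv).mp h)))
    (hz₀ _ rfl) (hz₀ _ rfl)
  rw [port_add_one hn hv, port_sub_one hn hv] at hends
  apply TF_no_hamiltonian_path l hch hnd hcov
  split_ifs at hends
  exacts [hends, hends.symm]
end

section
/- If n is even, every hamiltonian cycle of C_n □ K_2 containing all n pillars alternates strictly between pillar edges and cycle edges, with the cycle edges alternating between the top cycle and the base cycle; consequently such a cycle has exactly n/2 top-cycle edges and n/2 base-cycle edges. -/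
/-! In a hamiltonian cycle every vertex has degree two, so once all pillars are used each vertex
meets exactly one rim edge of the cycle: along each rim, the cycle's edges alternate, which makes
half of them lie in the cycle. The base and top edges over the same position cannot both be used,
since with the two pillars at their ends they would close a 4-cycle inside the hamiltonian cycle
(impossible for `n ≥ 3`); with the alternation this pairs base edge `i` with top edge `i + 1`. -/

open SimpleGraph

namespace SimpleGraph.Walk

variable {V : Type*} {G : SimpleGraph V}

theorem mem_of_mem_support_of_closed {u w : V} {p : G.Walk u w} {Q : Set V} (hu : u ∈ Q)
    (hQ : ∀ x ∈ Q, ∀ y, s(x, y) ∈ p.edges → y ∈ Q) : ∀ y ∈ p.support, y ∈ Q := by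
  induction p with
  | nil => simpa using hu
  | cons h p ih =>
    intro y hy
    rcases List.mem_cons.mp hy with rfl | hy
    · exact hu
    · exact ih (hQ _ hu _ (by simp)) (fun x hx z hz => hQ x hx z (by simp [hz])) y hy

theorem IsHamiltonianCycle.eq_univ_of_closed [DecidableEq V] {u : V} {c : G.Walk u u}
    (hc : c.IsHamiltonianCycle) {Q : Set V} {x : V} (hx : x ∈ Q)
    (hQ : ∀ x ∈ Q, ∀ y, s(x, y) ∈ c.edges → y ∈ Q) : Q = Set.univ := by
  have hx' := hc.mem_support x
  refine Set.eq_univ_of_forall fun y => mem_of_mem_support_of_closed (p := c.rotate x hx') hx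
    (fun a ha b hb => hQ a ha b ((c.rotate_edges x hx').mem_iff.mp hb)) y ?_
  exact ((isHamiltonianCycle_rotate hx').mpr hc).mem_support y

theorem mem_neighborSet_toSubgraph_iff {u w x y : V} {p : G.Walk u w} :
    y ∈ p.toSubgraph.neighborSet x ↔ s(x, y) ∈ p.edges :=
  adj_toSubgraph_iff_mem_edges

namespace IsCycle

variable {u x : V} {c : G.Walk u u}

theorem exists_ne_mem_edges (hc : c.IsCycle) (hx : x ∈ c.support) (a : V) :
    ∃ b, b ≠ a ∧ s(x, b) ∈ c.edges := by
  obtain ⟨b, hb, hba⟩ := Set.exists_ne_of_one_lt_ncard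
    (by rw [hc.ncard_neighborSet_toSubgraph_eq_two hx]; norm_num) a
  exact ⟨b, hba, mem_neighborSet_toSubgraph_iff.mp hb⟩

theorem eq_or_eq_of_mem_edges (hc : c.IsCycle) {a b y : V} (hab : a ≠ b)
    (ha : s(x, a) ∈ c.edges) (hb : s(x, b) ∈ c.edges) (hy : s(x, y) ∈ c.edges) :
    y = a ∨ y = b := by
  have hx : x ∈ c.support := c.fst_mem_support_of_mem_edges ha
  have hsub : {a, b} ⊆ c.toSubgraph.neighborSet x := by
    simp only [Set.insert_subset_iff, Set.singleton_subset_iff, mem_neighborSet_toSubgraph_iff]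
    exact ⟨ha, hb⟩
  have heq := Set.eq_of_subset_of_ncard_le hsub
    (by rw [hc.ncard_neighborSet_toSubgraph_eq_two hx, Set.ncard_pair hab])
    (c.finite_neighborSet_toSubgraph)
  have hy' : y ∈ ({a, b} : Set V) := heq ▸ mem_neighborSet_toSubgraph_iff.mpr hy
  simpa using hy'

end IsCycle

end SimpleGraph.Walk

theorem Set.ncard_eq_half_of_preimage_eq_compl {α : Type*} [Finite α] (σ : α ≃ α) {A : Set α}
    (h : σ ⁻¹' A = Aᶜ) : A.ncard = Nat.card α / 2 := by
  have hsum := A.ncard_add_ncard_compl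
  rw [← h, Set.ncard_preimage_of_injective_subset_range σ.injective (by simp)] at hsum
  omega

theorem ZMod.natCast_ne_zero_of_lt {k n : ℕ} (hk : 0 < k) (hkn : k < n) : (k : ZMod n) ≠ 0 := by
  rw [Ne, ZMod.natCast_eq_zero_iff]
  exact fun hdvd => absurd (Nat.le_of_dvd hk hdvd) (by omega)

theorem prismG_adj_cases {n : ℕ} {u w : PV n} (h : (prismG n).Adj u w) :
    w = (u.1, !u.2) ∨ w = (u.1 + 1, u.2) ∨ w = (u.1 - 1, u.2) := by
  obtain ⟨i, b⟩ := u
  obtain ⟨j, c⟩ := w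
  rw [prismG, fromRel_adj] at h
  obtain ⟨-, h | h⟩ := h <;> rcases h with ⟨h1, h2⟩ | ⟨h1, h2⟩
  · cases b <;> cases c <;> simp_all
  · simp_all
  · cases b <;> cases c <;> simp_all
  · simp only at h1 h2
    simp [h1, h2]

theorem isPillar_mk {n : ℕ} (x : PV n) : IsPillar s(x, (x.1, !x.2)) := by
  obtain ⟨i, _ | _⟩ := x
  · exact ⟨i, rfl⟩
  · exact ⟨i, Sym2.eq_swap⟩

def rimEdge (n : ℕ) (t : Bool) (i : ZMod n) : Sym2 (PV n) :=
  s(((i, t) : PV n), ((i + 1, t) : PV n))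

section HamiltonianCycleThroughPillars

variable {n : ℕ} {v : PV n} {C : (prismG n).Walk v v}

theorem pillar_mem_edges_at (hall : ∀ i : ZMod n, pillar n i ∈ C.edges) (x : PV n) :
    s(x, (x.1, !x.2)) ∈ C.edges := by
  obtain ⟨i, hi⟩ := isPillar_mk x
  exact hi ▸ hall i

theorem rimEdge_succ_mem_edges_iff (hn : 3 ≤ n) (hC : C.IsCycle)
    (hall : ∀ i : ZMod n, pillar n i ∈ C.edges) (t : Bool) (j : ZMod n) :
    rimEdge n t (j + 1) ∈ C.edges ↔ rimEdge n t j ∉ C.edges := by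
  have hpill := pillar_mem_edges_at hall ((j + 1, t) : PV n)
  have hback : rimEdge n t j = s(((j + 1, t) : PV n), ((j, t) : PV n)) := Sym2.eq_swap
  have hne : ((j + 1 + 1, t) : PV n) ≠ (j, t) := by
    simpa [Prod.ext_iff, add_assoc, one_add_one_eq_two] using
      ZMod.natCast_ne_zero_of_lt (k := 2) (by norm_num) hn
  rw [hback]
  constructor
  · intro hfwd hbwd
    rcases hC.eq_or_eq_of_mem_edges hne hfwd hbwd hpill with h | h <;> simp [Prod.ext_iff] at h
  · intro hbwd
    obtain ⟨w, hw, hwC⟩ := hC.exists_ne_mem_edges (C.fst_mem_support_of_mem_edges hpill) _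
    rcases prismG_adj_cases (C.adj_of_mem_edges hwC) with rfl | rfl | rfl
    · exact absurd rfl hw
    · exact hwC
    · rw [add_sub_cancel_right] at hwC
      exact absurd hwC hbwd

theorem not_baseEdge_mem_and_topEdge_mem (hn : 3 ≤ n) (hC : C.IsHamiltonianCycle)
    (hall : ∀ i : ZMod n, pillar n i ∈ C.edges) (j : ZMod n) :
    ¬ (baseEdge n j ∈ C.edges ∧ topEdge n j ∈ C.edges) := by
  rintro ⟨hbase, htop⟩
  have hrim : ∀ t, rimEdge n t j ∈ C.edges := Bool.forall_bool.mpr ⟨hbase, htop⟩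
  -- The vertices over `j` and `j + 1` span a 4-cycle of `C`, so `C` cannot leave them.
  set Q : Set (PV n) := {x | x.1 = j ∨ x.1 = j + 1}
  have hclosed : ∀ x ∈ Q, ∀ y, s(x, y) ∈ C.edges → y ∈ Q := by
    rintro ⟨i, t⟩ (rfl | rfl) y hy
    · rcases hC.isCycle.eq_or_eq_of_mem_edges (by simp) (pillar_mem_edges_at hall (i, t))
        (hrim t) hy with rfl | rfl <;> simp [Q]
    · have hrim' : s(((j + 1, t) : PV n), ((j, t) : PV n)) ∈ C.edges := Sym2.eq_swap ▸ hrim t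
      rcases hC.isCycle.eq_or_eq_of_mem_edges (by simp) (pillar_mem_edges_at hall (j + 1, t))
        hrim' hy with rfl | rfl <;> simp [Q]
  have hfar : ((j + 2, false) : PV n) ∈ Q :=
    hC.eq_univ_of_closed (x := (j, false)) (Or.inl rfl) hclosed ▸ trivial
  have h1 := ZMod.natCast_ne_zero_of_lt (k := 1) (by norm_num) (by omega : 1 < n)
  have h2 := ZMod.natCast_ne_zero_of_lt (k := 2) (by norm_num) hn
  simp only [Q, Set.mem_ofPred_eq] at hfar
  push_cast at h1 h2
  rcases hfar with h | h
  · exact h2 (by linear_combination h)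
  · exact h1 (by linear_combination h)

theorem isPillar_or_isPillar_of_mem_edges (hC : C.IsCycle)
    (hall : ∀ i : ZMod n, pillar n i ∈ C.edges) {e f : Sym2 (PV n)} (he : e ∈ C.edges)
    (hf : f ∈ C.edges) (hef : e ≠ f) {x : PV n} (hxe : x ∈ e) (hxf : x ∈ f) :
    IsPillar e ∨ IsPillar f := by
  obtain ⟨y, rfl⟩ := Sym2.mem_iff_exists.mp hxe
  obtain ⟨z, rfl⟩ := Sym2.mem_iff_exists.mp hxf
  have hyz : y ≠ z := fun h => hef (h ▸ rfl)
  rcases hC.eq_or_eq_of_mem_edges hyz he hf (pillar_mem_edges_at hall x) with h | h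
  · exact Or.inl (h ▸ isPillar_mk x)
  · exact Or.inr (h ▸ isPillar_mk x)

theorem baseEdge_mem_iff_topEdge_succ_mem (hn : 3 ≤ n) (hC : C.IsHamiltonianCycle)
    (hall : ∀ i : ZMod n, pillar n i ∈ C.edges) (i : ZMod n) :
    baseEdge n i ∈ C.edges ↔ topEdge n (i + 1) ∈ C.edges := by
  have hbase := rimEdge_succ_mem_edges_iff hn hC.isCycle hall false i
  have htop := rimEdge_succ_mem_edges_iff hn hC.isCycle hall true i
  have hi := not_baseEdge_mem_and_topEdge_mem hn hC hall i
  have hi' := not_baseEdge_mem_and_topEdge_mem hn hC hall (i + 1)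
  simp only [rimEdge] at hbase htop
  simp only [baseEdge, topEdge] at hi hi' ⊢
  tauto

theorem ncard_rimEdge_mem_edges (hn : 3 ≤ n) (hC : C.IsCycle)
    (hall : ∀ i : ZMod n, pillar n i ∈ C.edges) (t : Bool) :
    {i : ZMod n | rimEdge n t i ∈ C.edges}.ncard = n / 2 := by
  have : NeZero n := ⟨by omega⟩
  rw [Set.ncard_eq_half_of_preimage_eq_compl (Equiv.addRight 1), Nat.card_zmod]
  ext i
  exact rimEdge_succ_mem_edges_iff hn hC hall t i

end HamiltonianCycleThroughPillars

theorem stmt17_general (n : ℕ) (hn : 3 ≤ n) {v : PV n}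
    (C : (prismG n).Walk v v) (hC : C.IsHamiltonianCycle)
    (hall : ∀ i : ZMod n, pillar n i ∈ C.edges) :
    (∀ e ∈ C.edges, ∀ f ∈ C.edges, e ≠ f → ¬ IsPillar e → ¬ IsPillar f →
        ¬ ∃ x, x ∈ e ∧ x ∈ f) ∧
    (∀ i : ZMod n, baseEdge n i ∈ C.edges ↔ topEdge n (i + 1) ∈ C.edges) ∧
    {i : ZMod n | topEdge n i ∈ C.edges}.ncard = n / 2 ∧
    {i : ZMod n | baseEdge n i ∈ C.edges}.ncard = n / 2 := by
  refine ⟨?_, baseEdge_mem_iff_topEdge_succ_mem hn hC hall,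
    ncard_rimEdge_mem_edges hn hC.isCycle hall true,
    ncard_rimEdge_mem_edges hn hC.isCycle hall false⟩
  rintro e he f hf hef hpe hpf ⟨x, hxe, hxf⟩
  exact (isPillar_or_isPillar_of_mem_edges hC.isCycle hall he hf hef hxe hxf).elim hpe hpf

/-- If `n` is even, every hamiltonian cycle of `C_n □ K_2` containing all
`n` pillars alternates strictly between pillar edges and cycle edges (no two non-pillar
edges of the cycle share a vertex), its cycle edges alternate between the top and the base
cycle, and consequently it has exactly `n/2` top-cycle edges and `n/2` base-cycle edges. -/
theorem stmt17 (n : ℕ) (hn : 3 ≤ n) (heven : Even n) {v : PV n}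
    (C : (prismG n).Walk v v) (hC : C.IsHamiltonianCycle)
    (hall : ∀ i : ZMod n, pillar n i ∈ C.edges) :
    (∀ e ∈ C.edges, ∀ f ∈ C.edges, e ≠ f → ¬ IsPillar e → ¬ IsPillar f →
        ¬ ∃ x, x ∈ e ∧ x ∈ f) ∧
    (∀ i : ZMod n, baseEdge n i ∈ C.edges ↔ topEdge n (i + 1) ∈ C.edges) ∧
    {i : ZMod n | topEdge n i ∈ C.edges}.ncard = n / 2 ∧
    {i : ZMod n | baseEdge n i ∈ C.edges}.ncard = n / 2 :=
  stmt17_general n hn C hC hall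
end
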